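/- There exist infinitely many $z$ in the upper half-plane $\mathbb{H}$ satisfying $j(z) = \exp(z)$, where $j$ is the modular $j$-function. -/

import Mathlib

/-!
Choose a real `x₀` such that `exp x₀` is not a critical value of `j`: the critical points of a
nonconstant holomorphic function are countable, while `x ↦ exp x` is injective on `ℝ`. Let
`j z₁ = exp x₀` and let `ψ` be the local inverse of `j` at `z₁`. For `γ ∈ SL₂(ℤ)` with lower-left
entry `c` large and `a / c` close to `x₀`, `γ` maps a small disc around `z₁` to within `O(1/c²)` of
`a / c` and is `O(1/c²)`-Lipschitz there, so `ψ ∘ exp ∘ γ` is a contraction of that disc. Its fixed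
point `y` gives `s = γ y` with `j s = j y = exp s`, and these `s` accumulate at the real point `x₀`,
which is not itself a solution.
-/

open Complex Metric Set Filter Topology
open scoped NNReal

noncomputable def moebius (a b c d : ℝ) (z : ℂ) : ℂ := (a * z + b) / (c * z + d)

section Moebius

variable {a b c d δ : ℝ} {z w : ℂ}

theorem im_moebius (hdet : a * d - b * c = 1) (z : ℂ) :
    (moebius a b c d z).im = z.im / normSq (c * z + d) := by
  rw [moebius, div_im, div_sub_div_same]
  congr 1
  simp only [add_im, add_re, mul_im, mul_re, ofReal_re, ofReal_im]
  linear_combination z.im * hdet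

theorem moebius_denom_ne_zero (hdet : a * d - b * c = 1) (hz : 0 < z.im) :
    (c : ℂ) * z + d ≠ 0 := by
  intro h
  have hc : c = 0 := by
    have him := congrArg im h
    simp only [add_im, mul_im, ofReal_re, ofReal_im, zero_mul, add_zero, zero_im] at him
    exact (mul_eq_zero.1 him).resolve_right hz.ne'
  have hd : d = 0 := by simpa [hc] using congrArg re h
  simp [hc, hd] at hdet

theorem im_moebius_pos (hdet : a * d - b * c = 1) (hz : 0 < z.im) :
    0 < (moebius a b c d z).im := by
  rw [im_moebius hdet]
  exact div_pos hz (normSq_pos.2 (moebius_denom_ne_zero hdet hz))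

theorem mul_le_norm_moebius_denom (hc : 0 ≤ c) (hz : δ ≤ z.im) :
    c * δ ≤ ‖(c : ℂ) * z + d‖ :=
  calc c * δ ≤ c * z.im := mul_le_mul_of_nonneg_left hz hc
    _ = ((c : ℂ) * z + d).im := by simp
    _ ≤ ‖(c : ℂ) * z + d‖ := (le_abs_self _).trans (abs_im_le_norm _)

theorem moebius_sub_div (hdet : a * d - b * c = 1) (hc : c ≠ 0) (hz : (c : ℂ) * z + d ≠ 0) :
    moebius a b c d z - ((a / c : ℝ) : ℂ) = -1 / (c * (c * z + d)) := by
  have hc' : (c : ℂ) ≠ 0 := ofReal_ne_zero.2 hc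
  have hdet' : (a : ℂ) * d - b * c = 1 := by exact_mod_cast hdet
  rw [moebius, ofReal_div, div_sub_div _ _ hz hc',
    div_eq_div_iff (mul_ne_zero hz hc') (mul_ne_zero hc' hz)]
  linear_combination (-(c * (c * z + d))) * hdet'

theorem moebius_sub_moebius (hdet : a * d - b * c = 1) (hz : (c : ℂ) * z + d ≠ 0)
    (hw : (c : ℂ) * w + d ≠ 0) :
    moebius a b c d z - moebius a b c d w = (z - w) / ((c * z + d) * (c * w + d)) := by
  have hdet' : (a : ℂ) * d - b * c = 1 := by exact_mod_cast hdet
  rw [moebius, moebius, div_sub_div _ _ hz hw]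
  congr 1
  linear_combination (z - w) * hdet'

theorem norm_moebius_sub_div_le (hdet : a * d - b * c = 1) (hc : 0 < c) (hδ : 0 < δ)
    (hz : δ ≤ z.im) : ‖moebius a b c d z - ((a / c : ℝ) : ℂ)‖ ≤ 1 / (c ^ 2 * δ) := by
  have hden := mul_le_norm_moebius_denom (d := d) hc.le hz
  rw [moebius_sub_div hdet hc.ne' (moebius_denom_ne_zero hdet (hδ.trans_le hz)), norm_div,
    norm_neg, norm_one, norm_mul, norm_real, Real.norm_of_nonneg hc.le]
  exact one_div_le_one_div_of_le (by positivity) (by nlinarith)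

theorem lipschitzOnWith_moebius (hdet : a * d - b * c = 1) (hc : 0 < c) (hδ : 0 < δ) :
    LipschitzOnWith (1 / (c ^ 2 * δ ^ 2)).toNNReal (moebius a b c d) {z | δ ≤ z.im} := by
  refine LipschitzOnWith.of_dist_le' fun z hz w hw ↦ ?_
  have hzd := mul_le_norm_moebius_denom (d := d) hc.le hz
  have hwd := mul_le_norm_moebius_denom (d := d) hc.le hw
  rw [dist_eq_norm, dist_eq_norm, moebius_sub_moebius hdet (moebius_denom_ne_zero hdet
    (hδ.trans_le hz)) (moebius_denom_ne_zero hdet (hδ.trans_le hw)), norm_div, norm_mul,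
    one_div_mul_eq_div]
  refine div_le_div_of_nonneg_left (norm_nonneg _) (by positivity) ?_
  calc c ^ 2 * δ ^ 2 = (c * δ) * (c * δ) := by ring
    _ ≤ _ := mul_le_mul hzd hwd (by positivity) (norm_nonneg _)

end Moebius

theorem exists_seq_sl2_div_tendsto (x : ℝ) :
    ∃ a b c d : ℕ → ℤ, (∀ n, a n * d n - b n * c n = 1) ∧
      Tendsto (fun n ↦ (c n : ℝ)) atTop atTop ∧ Tendsto (fun n ↦ (a n / c n : ℝ)) atTop (𝓝 x) := by
  -- `a / c = m / n + 1 / n ^ 2` with `m = round (n * x)`, and `(mn + 1)(1 - mn) + m²n² = 1`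
  set m : ℕ → ℤ := fun n ↦ round (n * x)
  refine ⟨fun n ↦ m n * n + 1, fun n ↦ -m n ^ 2, fun n ↦ n ^ 2, fun n ↦ 1 - m n * n,
    fun n ↦ by ring, ?_, ?_⟩
  · push_cast
    exact (tendsto_pow_atTop two_ne_zero).comp tendsto_natCast_atTop_atTop
  · rw [tendsto_iff_dist_tendsto_zero]
    refine squeeze_zero' (Eventually.of_forall fun n ↦ dist_nonneg) ?_
      (tendsto_const_div_atTop_nhds_zero_nat 2)
    filter_upwards [eventually_gt_atTop 0] with n hn
    have hn' : (1 : ℝ) ≤ n := by exact_mod_cast hn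
    have hn₀ : (0 : ℝ) < n := by positivity
    have hround : |(m n : ℝ) - n * x| ≤ 1 / 2 := by
      rw [abs_sub_comm]; exact abs_sub_round _
    have hsplit : ((m n * n + 1 : ℤ) / (n ^ 2 : ℤ) : ℝ) - x = ((m n - n * x) * n + 1) / n ^ 2 := by
      push_cast; field_simp; ring
    have hnum : |((m n : ℝ) - n * x) * n + 1| ≤ 1 / 2 * n + 1 :=
      calc _ ≤ |((m n : ℝ) - n * x) * n| + |1| := abs_add_le _ _
        _ = |(m n : ℝ) - n * x| * n + 1 := by rw [abs_mul, abs_of_pos hn₀, abs_one]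
        _ ≤ 1 / 2 * n + 1 := by gcongr
    rw [Real.dist_eq, hsplit, abs_div, abs_of_pos (pow_pos hn₀ 2), div_le_div_iff₀ (by positivity)
      hn₀]
    calc |((m n : ℝ) - n * x) * n + 1| * n ≤ (1 / 2 * n + 1) * n := by gcongr
      _ ≤ 2 * n ^ 2 := by nlinarith

theorem HasStrictFDerivAt.exists_eq_of_lipschitzOnWith {𝕜 E F : Type*}
    [NontriviallyNormedField 𝕜] [NormedAddCommGroup E] [NormedSpace 𝕜 E] [CompleteSpace E]
    [NormedAddCommGroup F] [NormedSpace 𝕜 F] {f : E → F} {f' : E ≃L[𝕜] F} {a : E}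
    (hf : HasStrictFDerivAt f (f' : E →L[𝕜] F) a) {r : ℝ} (hr : 0 < r) :
    ∃ ε > 0, ∃ η : ℝ≥0, 0 < η ∧ ∀ g : E → F, MapsTo g (closedBall a r) (ball (f a) ε) →
      LipschitzOnWith η g (closedBall a r) → ∃ y ∈ closedBall a r, f y = g y := by
  set ψ := hf.localInverse f f' a
  obtain ⟨K, t, ht, hψ⟩ := hf.to_localInverse.exists_lipschitzOnWith
  have hnhds : {y | f (ψ y) = y} ∩ t ∩ ψ ⁻¹' ball a r ∈ 𝓝 (f a) :=
    inter_mem (inter_mem hf.eventually_right_inverse ht)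
      (hf.localInverse_continuousAt.preimage_mem_nhds
        (by rw [hf.localInverse_apply_image]; exact ball_mem_nhds a hr))
  obtain ⟨ε, hε, hball⟩ := Metric.mem_nhds_iff.1 hnhds
  refine ⟨ε, hε, (K + 1)⁻¹, by positivity, fun g hg hgη ↦ ?_⟩
  -- a solution of `f y = g y` is a fixed point of the contraction `ψ ∘ g`
  have hmaps : MapsTo (ψ ∘ g) (closedBall a r) (closedBall a r) :=
    fun z hz ↦ ball_subset_closedBall (hball (hg hz)).2
  have hcontr : ContractingWith (K * (K + 1)⁻¹) (hmaps.restrict _ _ _) := by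
    refine ⟨?_, ((hψ.comp hgη fun z hz ↦ (hball (hg hz)).1.2).mapsToRestrict hmaps)⟩
    rw [← div_eq_mul_inv, div_lt_one (by positivity)]
    exact lt_add_one K
  obtain ⟨y, hy, hfix, -⟩ := hcontr.exists_fixedPoint' isClosed_closedBall.isComplete hmaps
    (mem_closedBall_self hr.le) (edist_ne_top _ _)
  refine ⟨y, hy, ?_⟩
  rw [← (hball (hg hy)).1.1]
  exact congrArg f hfix.symm

theorem exists_mem_image_deriv_ne_zero {f : ℂ → ℂ} {U S : Set ℂ} (hU : IsOpen U)
    (hU' : IsPreconnected U) (hf : DifferentiableOn ℂ f U) (hS : ¬ S.Countable)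
    (hSf : S ⊆ f '' U) : ∃ z ∈ U, f z ∈ S ∧ deriv f z ≠ 0 := by
  have hcrit : ({z | deriv f z = 0} ∩ U).Countable := by
    rcases (hf.analyticOnNhd hU).deriv.eqOn_zero_or_eventually_ne_zero_of_preconnected hU' with
      h | h
    · obtain ⟨w, hw⟩ := hU.exists_is_const_of_deriv_eq_zero hU' hf h
      refine absurd ((countable_singleton w).mono fun v hv ↦ ?_) hS
      obtain ⟨z, hz, rfl⟩ := hSf hv
      exact hw z hz
    · exact (HereditarilyLindelofSpace.isLindelof _).countable_of_isDiscrete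
        (isDiscrete_of_codiscreteWithin h)
  obtain ⟨w, hwS, hw⟩ : (S \ f '' ({z | deriv f z = 0} ∩ U)).Nonempty :=
    sdiff_nonempty.2 fun h ↦ hS ((hcrit.image f).mono h)
  obtain ⟨z, hz, rfl⟩ := hSf hwS
  exact ⟨z, hz, hwS, fun h ↦ hw ⟨z, ⟨h, hz⟩, rfl⟩⟩

theorem mem_closure_setOf_eq_of_moebius_invariant {f p : ℂ → ℂ} {f' z₁ : ℂ} {x₀ : ℝ} {K : ℝ≥0}
    {t : Set ℂ}
    (hinv : ∀ a b c d : ℤ, a * d - b * c = 1 → ∀ z : ℂ, 0 < z.im → f (moebius a b c d z) = f z)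
    (hz₁ : 0 < z₁.im) (hf : HasStrictDerivAt f f' z₁) (hf' : f' ≠ 0)
    (hp : LipschitzOnWith K p t) (ht : t ∈ 𝓝 (x₀ : ℂ)) (hfp : f z₁ = p x₀) :
    (x₀ : ℂ) ∈ closure {s | 0 < s.im ∧ f s = p s} := by
  rw [Metric.mem_closure_iff]
  intro ε hε
  set δ := z₁.im / 2 with hδ_def
  have hδ : 0 < δ := half_pos hz₁
  have hball_im : closedBall z₁ δ ⊆ {z | δ ≤ z.im} := fun z hz ↦ by
    have := (abs_le.1 ((abs_im_le_norm (z - z₁)).trans (mem_closedBall_iff_norm.1 hz))).1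
    simp only [sub_im] at this
    show δ ≤ z.im
    linarith
  obtain ⟨ε₁, hε₁, η, hη, hsolve⟩ :=
    (hf.hasStrictFDerivAt_equiv hf').exists_eq_of_lipschitzOnWith hδ
  obtain ⟨τ, hτ, hτsub⟩ := Metric.mem_nhds_iff.1 <| inter_mem (inter_mem ht
    ((hp.continuousOn.continuousAt ht).preimage_mem_nhds (ball_mem_nhds _ hε₁)))
    (ball_mem_nhds _ hε)
  obtain ⟨a, b, c, d, hdet, hc, hac⟩ := exists_seq_sl2_div_tendsto x₀
  have hc2 : Tendsto (fun n ↦ (c n : ℝ) ^ 2 * δ) atTop atTop :=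
    ((tendsto_pow_atTop two_ne_zero).comp hc).atTop_mul_const hδ
  obtain ⟨n, hcn, hacn, hnear, hflat⟩ := (hc.eventually_gt_atTop 0 |>.and <|
    (Metric.tendsto_nhds.1 hac _ (half_pos hτ)).and <|
    ((tendsto_const_nhds (x := (1 : ℝ))).div_atTop hc2 |>.eventually_lt_const (half_pos hτ)).and <|
    ((tendsto_const_nhds (x := (K : ℝ))).div_atTop (hc2.atTop_mul_const hδ)).eventually_lt_const
      (NNReal.coe_pos.2 hη)).exists
  have hdetℝ : (a n : ℝ) * d n - b n * c n = 1 := by exact_mod_cast hdet n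
  set m := moebius (a n) (b n) (c n) (d n)
  have hmaps : MapsTo m (closedBall z₁ δ) (ball (x₀ : ℂ) τ) := fun z hz ↦ by
    have hz' := norm_moebius_sub_div_le hdetℝ hcn hδ (hball_im hz)
    rw [mem_ball, dist_eq_norm]
    calc ‖m z - x₀‖ ≤ ‖m z - ((a n / c n : ℝ) : ℂ)‖ + ‖((a n / c n : ℝ) : ℂ) - x₀‖ :=
          norm_sub_le_norm_sub_add_norm_sub _ _ _
      _ < τ / 2 + τ / 2 := by
          refine add_lt_add_of_le_of_lt (hz'.trans hnear.le) ?_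
          rwa [← ofReal_sub, norm_real, ← dist_eq_norm]
      _ = τ := add_halves τ
  have hlip : LipschitzOnWith η (p ∘ m) (closedBall z₁ δ) := by
    refine (hp.comp ((lipschitzOnWith_moebius hdetℝ hcn hδ).mono hball_im)
      fun z hz ↦ (hτsub (hmaps hz)).1.1).weaken ?_
    rw [← NNReal.coe_le_coe, NNReal.coe_mul, Real.coe_toNNReal _ (by positivity), mul_one_div,
      sq δ, ← mul_assoc]
    exact hflat.le
  obtain ⟨y, hy, hfy⟩ := hsolve (p ∘ m) (fun z hz ↦ hfp ▸ (hτsub (hmaps hz)).1.2) hlip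
  have hy_im : 0 < y.im := hδ.trans_le (hball_im hy)
  refine ⟨m y, ⟨im_moebius_pos hdetℝ hy_im, ?_⟩, ?_⟩
  · rw [hinv _ _ _ _ (hdet n) y hy_im]
    exact hfy
  · rw [dist_comm]
    exact (hτsub (hmaps hy)).2

theorem infinite_setOf_eq_of_moebius_invariant {f p : ℂ → ℂ}
    (hf : DifferentiableOn ℂ f {z | 0 < z.im}) (hsurj : ∀ w, ∃ z, 0 < z.im ∧ f z = w)
    (hinv : ∀ a b c d : ℤ, a * d - b * c = 1 → ∀ z : ℂ, 0 < z.im → f (moebius a b c d z) = f z)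
    (hp_inj : Function.Injective fun x : ℝ ↦ p x)
    (hp : ∀ x : ℝ, ∃ K, ∃ t ∈ 𝓝 (x : ℂ), LipschitzOnWith K p t) :
    {z | 0 < z.im ∧ f z = p z}.Infinite := by
  have hH : IsOpen {z : ℂ | 0 < z.im} := isOpen_lt continuous_const continuous_im
  have hrange : ¬ (range fun x : ℝ ↦ p x).Countable := fun h ↦
    Cardinal.not_countable_real (by simpa using h.preimage hp_inj)
  obtain ⟨z₁, hz₁, ⟨x₀, hx₀⟩, hderiv⟩ := exists_mem_image_deriv_ne_zero hH
    (convex_halfSpace_im_gt 0).isPreconnected hf hrange fun w _ ↦ hsurj w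
  obtain ⟨K, t, ht, hpK⟩ := hp x₀
  have hx₀_mem := mem_closure_setOf_eq_of_moebius_invariant hinv hz₁
    (hf.analyticAt (hH.mem_nhds hz₁)).hasStrictDerivAt hderiv hpK ht hx₀.symm
  exact fun hfin ↦ by simpa using (hfin.isClosed.closure_subset hx₀_mem).1

theorem j_eq_exp_infinitely_many_solutions_general
    (j : ℂ → ℂ)
    (hj_holo : DifferentiableOn ℂ j {z : ℂ | 0 < z.im})
    (hj_surj : ∀ c : ℂ, ∃ z : ℂ, 0 < z.im ∧ j z = c)
    (hj_fibers : ∀ z w : ℂ, 0 < z.im → 0 < w.im →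
      (j z = j w ↔ ∃ a b c d : ℤ, a * d - b * c = 1 ∧
        w = (((a : ℂ) * z + b) / ((c : ℂ) * z + d)))) :
    {z : ℂ | 0 < z.im ∧ j z = Complex.exp z}.Infinite := by
  refine infinite_setOf_eq_of_moebius_invariant hj_holo hj_surj (fun a b c d hdet z hz ↦ ?_)
    (fun x y h ↦ Real.exp_injective <| ofReal_injective <| by simpa only [ofReal_exp] using h)
    (fun x ↦ (contDiff_exp (𝕜 := ℂ)).contDiffAt.exists_lipschitzOnWith)
  have hw := im_moebius_pos (a := a) (b := b) (c := c) (d := d) (by exact_mod_cast hdet) hz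
  exact ((hj_fibers z _ hz hw).2 ⟨a, b, c, d, hdet, by simp [moebius]⟩).symm

/-- there are infinitely many `z` in the upper half-plane with
`j(z) = exp(z)`. Since Mathlib does not yet have the modular `j`-function, it is
characterized here by its defining properties: it is holomorphic on `ℍ`, surjective onto
`ℂ`, its fibers are exactly the `SL₂(ℤ)`-orbits, and it is normalized by `j(i) = 1728`
and `j(e^{2πi/3}) = 0` (these properties determine `j` uniquely). -/
theorem j_eq_exp_infinitely_many_solutions
    (j : ℂ → ℂ)
    (hj_holo : DifferentiableOn ℂ j {z : ℂ | 0 < z.im})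
    (hj_surj : ∀ c : ℂ, ∃ z : ℂ, 0 < z.im ∧ j z = c)
    (hj_fibers : ∀ z w : ℂ, 0 < z.im → 0 < w.im →
      (j z = j w ↔ ∃ a b c d : ℤ, a * d - b * c = 1 ∧
        w = (((a : ℂ) * z + b) / ((c : ℂ) * z + d))))
    (hj_i : j Complex.I = 1728)
    (hj_rho : j (Complex.exp (2 * Real.pi * Complex.I / 3)) = 0) :
    {z : ℂ | 0 < z.im ∧ j z = Complex.exp z}.Infinite :=
  j_eq_exp_infinitely_many_solutions_general j hj_holo hj_surj hj_fibers
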